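/- arXiv:1603.01855 — 5 statements merged into one kernel-verified Lean document; each statement's English description precedes it below -/
import Mathlib

section
/- Let F : ℝ^m → ℝ^a satisfy F(x) = ∑_{i≠j} h_{i,j}(x_i, x_j) for functions h_{i,j} : ℝ² → ℝ^a. Let P be a distribution on S_m with p(i,j) := ∑_{π∈S_m} P(π) 𝟙(π(1)=i, π(2)=j), and assume p(i,j)+p(j,i) > 0 for all i ≠ j. Then the estimator g(σ, x_{σ(1)}, x_{σ(2)}) := (h_{σ(1),σ(2)}(x_{σ(1)}, x_{σ(2)}) + h_{σ(2),σ(1)}(x_{σ(2)}, x_{σ(1)})) / (p(σ(1),σ(2)) + p(σ(2),σ(1))) satisfies E_{σ∼P}[g] = F(x). -/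
open Finset

/-- Unbiasedness of the top-2 feedback estimator for a pairwise
decomposable vector-valued function. -/
theorem stmt_1 {m a : ℕ} (hm : 2 ≤ m)
    (F : (Fin m → ℝ) → (Fin a → ℝ)) (h : Fin m → Fin m → ℝ → ℝ → (Fin a → ℝ))
    (P : Equiv.Perm (Fin m) → ℝ)
    (hPnn : ∀ π, 0 ≤ P π) (hPsum : ∑ π : Equiv.Perm (Fin m), P π = 1)
    (hF : ∀ x, F x = ∑ i : Fin m, ∑ j : Fin m,
      if i ≠ j then h i j (x i) (x j) else 0)
    (p : Fin m → Fin m → ℝ)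
    (hp : ∀ i j, p i j = ∑ π : Equiv.Perm (Fin m),
      P π * (if π ⟨0, by omega⟩ = i ∧ π ⟨1, by omega⟩ = j then 1 else 0))
    (hppos : ∀ i j, i ≠ j → 0 < p i j + p j i)
    (x : Fin m → ℝ) :
    ∑ σ : Equiv.Perm (Fin m),
      P σ • ((p (σ ⟨0, by omega⟩) (σ ⟨1, by omega⟩) +
              p (σ ⟨1, by omega⟩) (σ ⟨0, by omega⟩))⁻¹ •
        (h (σ ⟨0, by omega⟩) (σ ⟨1, by omega⟩) (x (σ ⟨0, by omega⟩)) (x (σ ⟨1, by omega⟩)) +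
         h (σ ⟨1, by omega⟩) (σ ⟨0, by omega⟩) (x (σ ⟨1, by omega⟩)) (x (σ ⟨0, by omega⟩))))
      = F x := by
  classical
  set e0 : Fin m := ⟨0, by omega⟩
  set e1 : Fin m := ⟨1, by omega⟩
  have h01 : ∀ σ : Equiv.Perm (Fin m), σ e0 ≠ σ e1 := by
    intro σ hσ
    have := σ.injective hσ
    simp [e0, e1, Fin.ext_iff] at this
  set g : Fin m → Fin m → (Fin a → ℝ) := fun i j =>
    if i ≠ j then (p i j + p j i)⁻¹ •
      (h i j (x i) (x j) + h j i (x j) (x i)) else 0 with hg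
  have gsymm : ∀ i j, g i j = g j i := by
    intro i j
    by_cases hij : i = j
    · subst hij; rfl
    · simp only [hg, if_pos hij, if_pos (Ne.symm hij), ne_eq]
      rw [add_comm (p i j), add_comm (h i j (x i) (x j))]
  have pick : ∀ σ : Equiv.Perm (Fin m),
      (∑ i : Fin m, ∑ j : Fin m,
        (if σ e0 = i ∧ σ e1 = j then P σ • g i j else 0)) = P σ • g (σ e0) (σ e1) := by
    intro σ
    rw [Finset.sum_eq_single (σ e0)]
    · rw [Finset.sum_eq_single (σ e1)]
      · simp
      · intro b _ hb
        simp [Ne.symm hb]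
      · simp
    · intro b _ hb
      apply Finset.sum_eq_zero
      intro j _
      simp [Ne.symm hb]
    · simp
  have step2 : (∑ σ : Equiv.Perm (Fin m), P σ • g (σ e0) (σ e1))
      = ∑ i : Fin m, ∑ j : Fin m, p i j • g i j := by
    have hval : ∀ i j : Fin m, p i j • g i j
        = ∑ σ : Equiv.Perm (Fin m),
            (if σ e0 = i ∧ σ e1 = j then P σ • g i j else 0) := by
      intro i j
      rw [hp, Finset.sum_smul]
      refine Finset.sum_congr rfl fun σ _ => ?_
      by_cases hc : σ e0 = i ∧ σ e1 = j <;> simp [hc]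
    calc (∑ σ : Equiv.Perm (Fin m), P σ • g (σ e0) (σ e1))
        = ∑ σ : Equiv.Perm (Fin m), ∑ i : Fin m, ∑ j : Fin m,
            (if σ e0 = i ∧ σ e1 = j then P σ • g i j else 0) := by
          exact Finset.sum_congr rfl fun σ _ => (pick σ).symm
      _ = ∑ i : Fin m, ∑ σ : Equiv.Perm (Fin m), ∑ j : Fin m,
            (if σ e0 = i ∧ σ e1 = j then P σ • g i j else 0) := Finset.sum_comm
      _ = ∑ i : Fin m, ∑ j : Fin m, ∑ σ : Equiv.Perm (Fin m),
            (if σ e0 = i ∧ σ e1 = j then P σ • g i j else 0) := by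
          exact Finset.sum_congr rfl fun i _ => Finset.sum_comm
      _ = ∑ i : Fin m, ∑ j : Fin m, p i j • g i j := by
          exact Finset.sum_congr rfl fun i _ => Finset.sum_congr rfl fun j _ =>
            (hval i j).symm
  have step1 : (∑ σ : Equiv.Perm (Fin m),
      P σ • ((p (σ e0) (σ e1) + p (σ e1) (σ e0))⁻¹ •
        (h (σ e0) (σ e1) (x (σ e0)) (x (σ e1)) +
         h (σ e1) (σ e0) (x (σ e1)) (x (σ e0)))))
      = ∑ σ : Equiv.Perm (Fin m), P σ • g (σ e0) (σ e1) := by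
    refine Finset.sum_congr rfl fun σ _ => ?_
    rw [hg]; simp [h01 σ]
  rw [step1, step2]
  have hswap : (∑ i : Fin m, ∑ j : Fin m, p i j • g i j)
      = ∑ i : Fin m, ∑ j : Fin m, p j i • g i j := by
    rw [Finset.sum_comm]
    exact Finset.sum_congr rfl fun i _ => Finset.sum_congr rfl fun j _ => by
      rw [gsymm]
  have hS2 : (∑ i : Fin m, ∑ j : Fin m, p i j • g i j)
      + (∑ i : Fin m, ∑ j : Fin m, p i j • g i j) = F x + F x := by
    calc (∑ i : Fin m, ∑ j : Fin m, p i j • g i j)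
          + (∑ i : Fin m, ∑ j : Fin m, p i j • g i j)
        = ∑ i : Fin m, ∑ j : Fin m, (p i j + p j i) • g i j := by
          nth_rewrite 2 [hswap]
          rw [← Finset.sum_add_distrib]
          exact Finset.sum_congr rfl fun i _ => by
            rw [← Finset.sum_add_distrib]
            exact Finset.sum_congr rfl fun j _ => by rw [add_smul]
      _ = ∑ i : Fin m, ∑ j : Fin m,
            (if i ≠ j then h i j (x i) (x j) + h j i (x j) (x i) else 0) := by
          refine Finset.sum_congr rfl fun i _ => Finset.sum_congr rfl fun j _ => ?_
          by_cases hij : i = j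
          · simp [hg, hij]
          · rw [hg]
            simp only [ne_eq, hij, not_false_eq_true, if_true, if_pos]
            rw [smul_smul, mul_inv_cancel₀ (ne_of_gt (hppos i j hij)), one_smul]
      _ = F x + F x := by
          rw [hF]
          have split : ∀ i j : Fin m,
              (if i ≠ j then h i j (x i) (x j) + h j i (x j) (x i) else 0)
              = (if i ≠ j then h i j (x i) (x j) else 0)
                + (if i ≠ j then h j i (x j) (x i) else 0) := by
            intro i j; by_cases hij : i ≠ j <;> simp [hij]
          simp_rw [split, Finset.sum_add_distrib]
          congr 1
          rw [Finset.sum_comm]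
          exact Finset.sum_congr rfl fun j _ => Finset.sum_congr rfl fun i _ => by
            by_cases hij : i = j
            · simp [hij]
            · simp [hij, Ne.symm hij]
  have h2S : (2:ℝ) • (∑ i : Fin m, ∑ j : Fin m, p i j • g i j) = (2:ℝ) • F x := by
    rw [two_smul, two_smul]; exact hS2
  exact smul_right_injective (Fin a → ℝ) (two_ne_zero) h2S
end

section
/- Let F : ℝ^m → ℝ^a be decomposable over k coordinates, i.e., F(x) = ∑_{(i_1,...,i_k) distinct} h_{i_1,...,i_k}(x_{i_1},...,x_{i_k}), and let P be a distribution on S_m such that for every set of k distinct indices {i_1,...,i_k}, the total probability q(i_1,...,i_k) := ∑_{(j_1,...,j_k) a permutation of (i_1,...,i_k)} p(j_1,...,j_k) is positive, where p(j_1,...,j_k) := ∑_{π} P(π)𝟙(π(1)=j_1,...,π(k)=j_k). Then g(σ, x_{σ(1)},...,x_{σ(k)}) := (∑_{(j_1,...,j_k)∈S_k} h_{σ(j_1),...,σ(j_k)}(x_{σ(j_1)},...,x_{σ(j_k)})) / q(σ(1),...,σ(k)) is an unbiased estimator of F(x) under σ ∼ P. -/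
open Finset

/-- Unbiasedness of the top-`k` feedback estimator for a function decomposable
over `k` coordinates at a time. Tuples of `k` distinct indices are injective
maps `Fin k → Fin m`. -/
theorem stmt_2 {m a k : ℕ} (hk : k ≤ m)
    (F : (Fin m → ℝ) → (Fin a → ℝ))
    (h : (Fin k → Fin m) → (Fin k → ℝ) → (Fin a → ℝ))
    (P : Equiv.Perm (Fin m) → ℝ)
    (hPnn : ∀ π, 0 ≤ P π) (hPsum : ∑ π : Equiv.Perm (Fin m), P π = 1)
    (hF : ∀ x, F x = ∑ t ∈ Finset.univ.filter (fun t : Fin k → Fin m => Function.Injective t),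
      h t (fun j => x (t j)))
    (p : (Fin k → Fin m) → ℝ)
    (hp : ∀ t, p t = ∑ π : Equiv.Perm (Fin m),
      P π * (if ∀ j : Fin k, π (Fin.castLE hk j) = t j then 1 else 0))
    (q : (Fin k → Fin m) → ℝ)
    (hq : ∀ t, q t = ∑ τ : Equiv.Perm (Fin k), p (t ∘ τ))
    (hqpos : ∀ t : Fin k → Fin m, Function.Injective t → 0 < q t)
    (x : Fin m → ℝ) :
    ∑ σ : Equiv.Perm (Fin m),
      P σ • ((q (fun j => σ (Fin.castLE hk j)))⁻¹ •
        ∑ τ : Equiv.Perm (Fin k),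
          h (fun j => σ (Fin.castLE hk (τ j))) (fun j => x (σ (Fin.castLE hk (τ j)))))
      = F x := by
  classical
  have hq_comp : ∀ (t : Fin k → Fin m) (τ : Equiv.Perm (Fin k)), q (t ∘ τ) = q t := by
    intro t τ
    rw [hq, hq]
    apply Fintype.sum_equiv (Equiv.mulLeft τ)
    intro ρ
    congr 1
  set G : (Fin k → Fin m) → (Fin a → ℝ) := fun t =>
    (q t)⁻¹ • ∑ τ : Equiv.Perm (Fin k), h (t ∘ τ) (fun j => x (t (τ j))) with hG
  -- Step 1: LHS = ∑ over all tuples t of p t • G t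
  have inner : ∀ σ : Equiv.Perm (Fin m),
      (∑ t : Fin k → Fin m,
        (P σ * (if ∀ j : Fin k, σ (Fin.castLE hk j) = t j then 1 else 0)) • G t)
      = P σ • G (fun j => σ (Fin.castLE hk j)) := by
    intro σ
    rw [Finset.sum_eq_single (fun j => σ (Fin.castLE hk j))]
    · simp
    · intro t _ hne
      have : ¬ ∀ j : Fin k, σ (Fin.castLE hk j) = t j := by
        intro hall
        exact hne (funext fun j => (hall j).symm)
      simp [this]
    · simp
  have step1 : (∑ σ : Equiv.Perm (Fin m),
      P σ • ((q (fun j => σ (Fin.castLE hk j)))⁻¹ •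
        ∑ τ : Equiv.Perm (Fin k),
          h (fun j => σ (Fin.castLE hk (τ j))) (fun j => x (σ (Fin.castLE hk (τ j))))))
      = ∑ t : Fin k → Fin m, p t • G t := by
    have expand : ∀ t : Fin k → Fin m, p t • G t =
        ∑ σ : Equiv.Perm (Fin m),
          (P σ * (if ∀ j : Fin k, σ (Fin.castLE hk j) = t j then 1 else 0)) • G t := by
      intro t
      rw [hp, Finset.sum_smul]
    rw [Finset.sum_congr rfl fun t _ => expand t, Finset.sum_comm]
    exact Finset.sum_congr rfl fun σ _ => (inner σ).symm ▸ rfl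
  rw [step1, hF]
  -- restrict to injective tuples
  have hp0 : ∀ t : Fin k → Fin m, ¬ Function.Injective t → p t = 0 := by
    intro t ht
    rw [hp]
    apply Finset.sum_eq_zero
    intro π _
    have : ¬ ∀ j : Fin k, π (Fin.castLE hk j) = t j := by
      intro hall
      apply ht
      have ht' : t = fun j => π (Fin.castLE hk j) := funext fun j => (hall j).symm
      rw [ht']
      exact π.injective.comp (Fin.castLE_injective hk)
    simp [this]
  rw [show (∑ t : Fin k → Fin m, p t • G t)
      = ∑ t ∈ Finset.univ.filter (fun t : Fin k → Fin m => Function.Injective t), p t • G t from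
    (Finset.sum_filter_of_ne (fun t _ hne => by
      by_contra hinj
      exact hne (by rw [hp0 t hinj, zero_smul]))).symm]
  -- expand G and swap the sums
  have key : ∀ t ∈ Finset.univ.filter (fun t : Fin k → Fin m => Function.Injective t),
      p t • G t = ∑ τ : Equiv.Perm (Fin k),
        (p t * (q (t ∘ τ))⁻¹) • h (t ∘ τ) (fun j => x (t (τ j))) := by
    intro t ht
    rw [hG]
    simp only [Finset.smul_sum, smul_smul]
    exact Finset.sum_congr rfl fun τ _ => by rw [hq_comp]
  rw [Finset.sum_congr rfl key, Finset.sum_comm]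
  -- reindex the inner sum by s = t ∘ τ
  have reindex : ∀ τ : Equiv.Perm (Fin k),
      (∑ t ∈ Finset.univ.filter (fun t : Fin k → Fin m => Function.Injective t),
        (p t * (q (t ∘ τ))⁻¹) • h (t ∘ τ) (fun j => x (t (τ j))))
      = ∑ s ∈ Finset.univ.filter (fun t : Fin k → Fin m => Function.Injective t),
        (p (s ∘ ⇑τ⁻¹) * (q s)⁻¹) • h s (fun j => x (s j)) := by
    intro τ
    apply Finset.sum_nbij' (fun t => t ∘ ⇑τ) (fun s => s ∘ ⇑τ⁻¹)
    · intro t ht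
      simp only [Finset.mem_filter, Finset.mem_univ, true_and] at ht ⊢
      exact ht.comp τ.injective
    · intro s hs
      simp only [Finset.mem_filter, Finset.mem_univ, true_and] at hs ⊢
      exact hs.comp τ⁻¹.injective
    · intro t _
      funext j; simp
    · intro s _
      funext j; simp
    · intro t _
      have h1 : (t ∘ ⇑τ) ∘ ⇑τ⁻¹ = t := by funext j; simp
      rw [h1, hq_comp]
      rfl
  rw [Finset.sum_congr rfl fun τ _ => reindex τ, Finset.sum_comm]
  -- collapse the τ sum using hq
  apply Finset.sum_congr rfl
  intro t ht
  simp only [Finset.mem_filter, Finset.mem_univ, true_and] at ht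
  rw [← Finset.sum_smul, ← Finset.sum_mul]
  have hsum : ∑ τ : Equiv.Perm (Fin k), p (t ∘ ⇑τ⁻¹) = q t := by
    rw [hq]
    exact Fintype.sum_equiv (Equiv.inv _) _ _ (fun τ => rfl)
  rw [hsum, mul_inv_cancel₀ (hqpos t ht).ne', one_smul]
end

section
/- If an unbiased estimator G(σ, x_{σ(1)},...,x_{σ(k)}) of F(x) exists for all x ∈ ℝ^m, based on observing a random permutation σ ∼ P on S_m together with the top-k coordinates x_{σ(1)},...,x_{σ(k)}, then F can be written in the form F(x) = ∑_{(i_1,...,i_k) distinct ordered tuples} h_{i_1,...,i_k}(x_{i_1},...,x_{i_k}) for some functions h_{i_1,...,i_k} : ℝ^k → ℝ^a. -/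
open Finset

/-- Necessity: if an unbiased estimator of `F x` can be built from the top-`k`
feedback `(σ, x_{σ(1)}, …, x_{σ(k)})`, then `F` decomposes over `k` coordinates
at a time. -/
theorem stmt_3 {m a k : ℕ} (hk : k ≤ m)
    (F : (Fin m → ℝ) → (Fin a → ℝ))
    (P : Equiv.Perm (Fin m) → ℝ)
    (hPnn : ∀ π, 0 ≤ P π) (hPsum : ∑ π : Equiv.Perm (Fin m), P π = 1)
    (G : Equiv.Perm (Fin m) → (Fin k → ℝ) → (Fin a → ℝ))
    (hunbiased : ∀ x : Fin m → ℝ,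
      ∑ σ : Equiv.Perm (Fin m), P σ • G σ (fun j => x (σ (Fin.castLE hk j))) = F x) :
    ∃ h : (Fin k → Fin m) → (Fin k → ℝ) → (Fin a → ℝ),
      ∀ x : Fin m → ℝ,
        F x = ∑ t ∈ Finset.univ.filter (fun t : Fin k → Fin m => Function.Injective t),
          h t (fun j => x (t j)) := by
  refine ⟨fun t y => ∑ σ ∈ Finset.univ.filter
      (fun σ : Equiv.Perm (Fin m) => (fun j => σ (Fin.castLE hk j)) = t),
      P σ • G σ y, fun x => ?_⟩
  rw [← hunbiased x]
  rw [← Finset.sum_fiberwise_of_maps_to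
    (g := fun σ : Equiv.Perm (Fin m) => (fun j => σ (Fin.castLE hk j)))
    (t := Finset.univ.filter (fun t : Fin k → Fin m => Function.Injective t))
    (fun σ _ => by
      simp only [Finset.mem_filter, Finset.mem_univ, true_and]
      exact fun i j hij => Fin.castLE_injective hk (σ.injective hij))]
  refine Finset.sum_congr rfl fun t ht => Finset.sum_congr rfl fun σ hσ => ?_
  simp only [Finset.mem_filter] at hσ
  rw [← hσ.2]
end

section
/- The gradient of the RankSVM surrogate is not decomposable over single coordinates of the relevance vector: for m = 3, there is no collection of functions h_1, h_2, h_3 with h_i depending only on R_i (and on s) such that ∇_s φ_svm(s, R) = h_1(R_1) + h_2(R_2) + h_3(R_3) for all binary relevance vectors R ∈ {0,1}³ and all score vectors s. In particular, taking s = (1,0,0), the coefficient 𝟙(R_2 > R_1) + 𝟙(R_3 > R_1) of e_1 in ∇_s φ_svm(s, R) is not a function of R_1 alone. -/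
/-!
A function of the form `R ↦ ∑ i, h i (R i)` has vanishing mixed differences: exchanging the
values of two relevance vectors at some coordinates does not change the sum of its values.
At `s = (1, 0, 0)` the first coordinate of the gradient is `𝟙(R₁ < R₂) + 𝟙(R₁ < R₃)`,
which takes the values `0, 0` at `R = (1,1,0), (0,0,0)` but `0, 1` at `R = (1,0,0), (0,1,0)`.
-/

open Finset

/-- Gradient of the RankSVM surrogate
`φ_svm(s,R) = ∑_{i≠j} 𝟙(R_i > R_j) max(0, 1 + s_j − s_i)` with respect to `s`. -/
noncomputable def gradSvm (s R : Fin 3 → ℝ) : Fin 3 → ℝ :=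
  ∑ i : Fin 3, ∑ j : Fin 3,
    if i ≠ j ∧ R i > R j ∧ 1 + s j > s i
    then (Pi.single j (1 : ℝ) - Pi.single i (1 : ℝ)) else 0

theorem sum_add_sum_eq_of_forall_swap {ι α M : Type*} [Fintype ι] [AddCommMonoid M]
    (h : ι → α → M) {x₁ x₂ y₁ y₂ : ι → α}
    (hxy : ∀ k, (x₁ k = y₁ k ∧ x₂ k = y₂ k) ∨ (x₁ k = y₂ k ∧ x₂ k = y₁ k)) :
    ∑ k, h k (x₁ k) + ∑ k, h k (x₂ k) = ∑ k, h k (y₁ k) + ∑ k, h k (y₂ k) := by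
  simp only [← sum_add_distrib]
  refine sum_congr rfl fun k _ => ?_
  rcases hxy k with ⟨h₁, h₂⟩ | ⟨h₁, h₂⟩
  · rw [h₁, h₂]
  · rw [h₁, h₂, add_comm]

theorem gradSvm_one_zero_zero_apply_zero (R : Fin 3 → ℝ) :
    gradSvm ![1, 0, 0] R 0 = (if R 0 < R 1 then 1 else 0) + (if R 0 < R 2 then 1 else 0) := by
  simp only [gradSvm, Finset.sum_apply, Fin.sum_univ_three, Pi.add_apply, ite_apply]
  simp

/-- The gradient of the RankSVM surrogate (for `m = 3`) cannot be decomposed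
over single coordinates of the relevance vector: there are no functions
`h_i`, with `h_i` depending only on `s` and `R_i`, such that
`∇_s φ_svm(s,R) = h_1(R_1) + h_2(R_2) + h_3(R_3)` for all binary `R` and all `s`. -/
theorem stmt_6 :
    ¬ ∃ h : (Fin 3 → ℝ) → Fin 3 → ℝ → (Fin 3 → ℝ),
      ∀ s : Fin 3 → ℝ, ∀ R : Fin 3 → ℝ, (∀ i, R i = 0 ∨ R i = 1) →
        gradSvm s R = ∑ i : Fin 3, h s i (R i) := by
  rintro ⟨h, H⟩
  have binary (a b : ℝ) (ha : a = 0 ∨ a = 1) (hb : b = 0 ∨ b = 1) :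
      ∀ i : Fin 3, ![a, b, 0] i = 0 ∨ ![a, b, 0] i = 1 := by
    intro i
    fin_cases i <;> simp [ha, hb]
  have swap := sum_add_sum_eq_of_forall_swap (h ![1, 0, 0])
    (x₁ := ![1, 1, 0]) (x₂ := ![0, 0, 0]) (y₁ := ![1, 0, 0]) (y₂ := ![0, 1, 0])
    (by intro k; fin_cases k <;> simp)
  rw [← H _ _ (binary 1 1 (by simp) (by simp)), ← H _ _ (binary 0 0 (by simp) (by simp)),
    ← H _ _ (binary 1 0 (by simp) (by simp)), ← H _ _ (binary 0 1 (by simp) (by simp))] at swap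
  have first_coord := congrFun swap 0
  simp [gradSvm_one_zero_zero_apply_zero] at first_coord
  norm_num at first_coord
end

section
/- There exist two probability distributions p and p̃ over {0,1}³ with equal means E_{R∼p}[R] = E_{R∼p̃}[R] = (0.45, 0.45, 0.4), but such that the vectors v_p = E_{R∼p}[G(R)/Z_3(R)] and v_{p̃} = E_{R∼p̃}[G(R)/Z_3(R)] induce different descending sort orders: the largest coordinate of v_p is the 2nd while the largest coordinate of v_{p̃} is the 3rd. Specifically, p assigns probabilities (0, 0.1, 0.15, 0.05, 0.2, 0.3, 0.2, 0) and p̃ assigns (0, 0.3, 0, 0, 0.15, 0.15, 0.4, 0) to the relevance vectors (000, 110, 101, 011, 100, 010, 001, 111) respectively. -/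
open Finset Real

/-- Gain function `G(r) = 2^r − 1`. -/
noncomputable def Gf (r : ℝ) : ℝ := (2 : ℝ) ^ r - 1

/-- Position discount `D(i) = 1/log₂(i+1)` for positions `i = 1, 2, 3`
(indexed here by `Fin 3`, so position `i.val + 1`). -/
noncomputable def Dd (i : Fin 3) : ℝ := 1 / Real.logb 2 (i.val + 2)

/-- NDCG normalizer `Z₃(R) = max_{π ∈ S₃} ∑ᵢ G(R_{π(i)}) D(i)`. -/
noncomputable def Z3 (R : Fin 3 → ℝ) : ℝ :=
  ⨆ e : Equiv.Perm (Fin 3), ∑ i : Fin 3, Gf (R (e i)) * Dd i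

/-- Real-valued relevance vector associated to a binary one. -/
def toReal3 (R : Fin 3 → Bool) : Fin 3 → ℝ := fun i => if R i then 1 else 0

/-- `E_{R∼p}[G(R)/Z₃(R)]`, with the convention that `G(R)/Z₃(R) = 0` for the
all-zero relevance vector. -/
noncomputable def vVec (p : (Fin 3 → Bool) → ℝ) (i : Fin 3) : ℝ :=
  ∑ R : Fin 3 → Bool, p R *
    (if ∀ j, R j = false then 0 else Gf (toReal3 R i) / Z3 (toReal3 R))

/-- The specific distribution `p` of the paper. -/
noncomputable def pdist : (Fin 3 → Bool) → ℝ := fun R =>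
  if R = ![false, false, false] then 0
  else if R = ![true, true, false] then 0.1
  else if R = ![true, false, true] then 0.15
  else if R = ![false, true, true] then 0.05
  else if R = ![true, false, false] then 0.2
  else if R = ![false, true, false] then 0.3
  else if R = ![false, false, true] then 0.2
  else 0

/-- The specific distribution `p̃` of the paper. -/
noncomputable def ptilde : (Fin 3 → Bool) → ℝ := fun R =>
  if R = ![false, false, false] then 0
  else if R = ![true, true, false] then 0.3
  else if R = ![true, false, true] then 0
  else if R = ![false, true, true] then 0
  else if R = ![true, false, false] then 0.15
  else if R = ![false, true, false] then 0.15
  else if R = ![false, false, true] then 0.4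
  else 0


section Aux

lemma rpow22 : (2:ℝ) ^ (2:ℝ) = 4 := by
  rw [show (2:ℝ) = ((2:ℕ):ℝ) by norm_num, Real.rpow_natCast]; norm_num

lemma hL1 : 1 < Real.logb 2 3 := by
  rw [show (1:ℝ) = Real.logb 2 2 from (Real.logb_self_eq_one (by norm_num)).symm]
  exact Real.logb_lt_logb (by norm_num) (by norm_num) (by norm_num)

lemma hL2 : Real.logb 2 3 < 2 := by
  rw [Real.logb_lt_iff_lt_rpow (by norm_num) (by norm_num), rpow22]; norm_num

lemma Dd0 : Dd 0 = 1 := by simp [Dd]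

lemma Dd1 : Dd 1 = 1 / Real.logb 2 3 := by norm_num [Dd]

lemma Dd2 : Dd 2 = 1 / 2 := by
  have h4 : Real.logb 2 4 = 2 := by
    rw [← rpow22, Real.logb_rpow (by norm_num) (by norm_num)]
  norm_num [Dd, h4]

lemma Gf0 : Gf 0 = 0 := by simp [Gf]
lemma Gf1 : Gf 1 = 1 := by norm_num [Gf, Real.rpow_one]

lemma sum_perm (e : Equiv.Perm (Fin 3)) (R : Fin 3 → Bool) :
    ∑ i : Fin 3, Gf (toReal3 R (e i)) * Dd i = ∑ j : Fin 3, Gf (toReal3 R j) * Dd (e.symm j) := by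
  rw [← Equiv.sum_comp e (fun j => Gf (toReal3 R j) * Dd (e.symm j))]
  simp

lemma Dd_le_one (i : Fin 3) : Dd i ≤ 1 := by
  have h1 := hL1
  match i with
  | 0 => rw [Dd0]
  | 1 => rw [Dd1, div_le_one (by linarith)]; linarith
  | 2 => rw [Dd2]; norm_num

lemma Dd_add_le (i j : Fin 3) (hij : i ≠ j) : Dd i + Dd j ≤ 1 + 1 / Real.logb 2 3 := by
  have h1 := hL1
  have h2 := hL2
  have hL0 : (0:ℝ) < Real.logb 2 3 := by linarith
  have hhalf : (1:ℝ)/2 ≤ 1 / Real.logb 2 3 := by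
    rw [div_le_div_iff₀ (by norm_num) hL0]; linarith
  have hone : 1 / Real.logb 2 3 ≤ 1 := by
    rw [div_le_one hL0]; linarith
  match i, j with
  | 0, 0 => exact absurd rfl hij
  | 1, 1 => exact absurd rfl hij
  | 2, 2 => exact absurd rfl hij
  | 0, 1 => rw [Dd0, Dd1]
  | 1, 0 => rw [Dd0, Dd1]; linarith
  | 0, 2 => rw [Dd0, Dd2]; linarith
  | 2, 0 => rw [Dd0, Dd2]; linarith
  | 1, 2 => rw [Dd1, Dd2]; linarith
  | 2, 1 => rw [Dd1, Dd2]; linarith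

lemma Z3_eq (f : Fin 3 → ℝ) (c : ℝ) (e₀ : Equiv.Perm (Fin 3))
    (h1 : ∑ i : Fin 3, Gf (f (e₀ i)) * Dd i = c)
    (h2 : ∀ e : Equiv.Perm (Fin 3), ∑ i : Fin 3, Gf (f (e i)) * Dd i ≤ c) : Z3 f = c := by
  refine le_antisymm (ciSup_le h2) ?_
  rw [← h1]
  exact le_ciSup (f := fun e : Equiv.Perm (Fin 3) => ∑ i : Fin 3, Gf (f (e i)) * Dd i)
    (Set.Finite.bddAbove (Set.finite_range _)) e₀

lemma Z100 : Z3 (toReal3 ![true,false,false]) = 1 := by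
  apply Z3_eq _ _ (Equiv.refl _)
  · simp [toReal3, Fin.sum_univ_three, Gf0, Gf1, Dd0]
  · intro e
    rw [sum_perm e]
    simp [toReal3, Fin.sum_univ_three, Gf0, Gf1]
    exact Dd_le_one _

lemma Z010 : Z3 (toReal3 ![false,true,false]) = 1 := by
  apply Z3_eq _ _ (Equiv.swap 0 1)
  · simp [toReal3, Fin.sum_univ_three, Gf0, Gf1, Dd0, Equiv.swap_apply_def]
  · intro e
    rw [sum_perm e]
    simp [toReal3, Fin.sum_univ_three, Gf0, Gf1]
    exact Dd_le_one _

lemma Z001 : Z3 (toReal3 ![false,false,true]) = 1 := by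
  apply Z3_eq _ _ (Equiv.swap 0 2)
  · simp [toReal3, Fin.sum_univ_three, Gf0, Gf1, Dd0, Equiv.swap_apply_def]
  · intro e
    rw [sum_perm e]
    simp [toReal3, Fin.sum_univ_three, Gf0, Gf1]
    exact Dd_le_one _

lemma Z110 : Z3 (toReal3 ![true,true,false]) = 1 + 1 / Real.logb 2 3 := by
  apply Z3_eq _ _ (Equiv.refl _)
  · simp [toReal3, Fin.sum_univ_three, Gf0, Gf1, Dd0, Dd1]
  · intro e
    rw [sum_perm e]
    simp [toReal3, Fin.sum_univ_three, Gf0, Gf1]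
    simpa [one_div] using Dd_add_le _ _ (e.symm.injective.ne (show (0:Fin 3) ≠ 1 by decide))

lemma Z101 : Z3 (toReal3 ![true,false,true]) = 1 + 1 / Real.logb 2 3 := by
  apply Z3_eq _ _ (Equiv.swap 1 2)
  · simp [toReal3, Fin.sum_univ_three, Gf0, Gf1, Dd0, Dd1, Equiv.swap_apply_def]
  · intro e
    rw [sum_perm e]
    simp [toReal3, Fin.sum_univ_three, Gf0, Gf1]
    simpa [one_div] using Dd_add_le _ _ (e.symm.injective.ne (show (0:Fin 3) ≠ 2 by decide))

lemma Z011 : Z3 (toReal3 ![false,true,true]) = 1 + 1 / Real.logb 2 3 := by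
  apply Z3_eq _ _ (Equiv.swap 0 1 * Equiv.swap 1 2)
  · simp [toReal3, Fin.sum_univ_three, Gf0, Gf1, Dd0, Dd1, Equiv.swap_apply_def,
      Equiv.Perm.mul_apply]
  · intro e
    rw [sum_perm e]
    simp [toReal3, Fin.sum_univ_three, Gf0, Gf1]
    simpa [one_div] using Dd_add_le _ _ (e.symm.injective.ne (show (1:Fin 3) ≠ 2 by decide))

lemma sum_bool3 (F : (Fin 3 → Bool) → ℝ) :
    ∑ R : Fin 3 → Bool, F R =
      F ![false,false,false] + F ![false,false,true] + F ![false,true,false] + F ![false,true,true] +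
      F ![true,false,false] + F ![true,false,true] + F ![true,true,false] + F ![true,true,true] := by
  rw [show (univ : Finset (Fin 3 → Bool)) =
    {![false,false,false], ![false,false,true], ![false,true,false], ![false,true,true],
     ![true,false,false], ![true,false,true], ![true,true,false], ![true,true,true]} from by decide]
  rw [Finset.sum_insert (by decide), Finset.sum_insert (by decide), Finset.sum_insert (by decide),
    Finset.sum_insert (by decide), Finset.sum_insert (by decide), Finset.sum_insert (by decide),
    Finset.sum_insert (by decide), Finset.sum_singleton]
  ring

end Aux

set_option maxHeartbeats 2000000 in
/-- `p` and `p̃` are probability distributions with the same mean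
`(0.45, 0.45, 0.4)`, yet `E_p[G(R)/Z₃(R)]` is maximized at coordinate 2 while
`E_{p̃}[G(R)/Z₃(R)]` is maximized at coordinate 3. -/
theorem stmt_16 :
    (∀ R, 0 ≤ pdist R) ∧ (∑ R : Fin 3 → Bool, pdist R = 1) ∧
    (∀ R, 0 ≤ ptilde R) ∧ (∑ R : Fin 3 → Bool, ptilde R = 1) ∧
    (fun i : Fin 3 => ∑ R : Fin 3 → Bool, pdist R * toReal3 R i)
      = ![0.45, 0.45, 0.4] ∧
    (fun i : Fin 3 => ∑ R : Fin 3 → Bool, ptilde R * toReal3 R i)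
      = ![0.45, 0.45, 0.4] ∧
    (∀ j : Fin 3, j ≠ 1 → vVec pdist j < vVec pdist 1) ∧
    (∀ j : Fin 3, j ≠ 2 → vVec ptilde j < vVec ptilde 2) := by
  have hL1' := hL1
  have hL2' := hL2
  have hL0 : (0:ℝ) < Real.logb 2 3 := by linarith
  have hinv1 : (Real.logb 2 3)⁻¹ < 1 := by
    rw [inv_lt_one_iff₀]; right; exact hL1'
  have hinvmul : (Real.logb 2 3)⁻¹ * Real.logb 2 3 = 1 := inv_mul_cancel₀ (ne_of_gt hL0)
  have hinv2 : (1:ℝ)/2 < (Real.logb 2 3)⁻¹ := by nlinarith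
  have hinv0 : (0:ℝ) < (Real.logb 2 3)⁻¹ := by positivity
  have hd0 : (0:ℝ) < 1 + (Real.logb 2 3)⁻¹ := by linarith
  have hA0 : (0:ℝ) < (1 + (Real.logb 2 3)⁻¹)⁻¹ := by positivity
  have hAd : (1 + (Real.logb 2 3)⁻¹)⁻¹ * (1 + (Real.logb 2 3)⁻¹) = 1 :=
    inv_mul_cancel₀ (ne_of_gt hd0)
  have hA1 : (1 + (Real.logb 2 3)⁻¹)⁻¹ < 1 := by nlinarith
  have hA2 : (1 + (Real.logb 2 3)⁻¹)⁻¹ < 2/3 := by nlinarith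
  have hp0 : vVec pdist 0 = 0.25 * (1 + (Real.logb 2 3)⁻¹)⁻¹ + 0.2 := by
    rw [vVec, sum_bool3]
    simp (config := { decide := true }) only [pdist, if_true, if_false, toReal3]
    norm_num [Z110, Z101, Z011, Z100, Z010, Z001, Gf0, Gf1]
    ring
  have hp1 : vVec pdist 1 = 0.15 * (1 + (Real.logb 2 3)⁻¹)⁻¹ + 0.3 := by
    rw [vVec, sum_bool3]
    simp (config := { decide := true }) only [pdist, if_true, if_false, toReal3]
    norm_num [Z110, Z101, Z011, Z100, Z010, Z001, Gf0, Gf1]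
    ring
  have hp2 : vVec pdist 2 = 0.2 * (1 + (Real.logb 2 3)⁻¹)⁻¹ + 0.2 := by
    rw [vVec, sum_bool3]
    simp (config := { decide := true }) only [pdist, if_true, if_false, toReal3]
    norm_num [Z110, Z101, Z011, Z100, Z010, Z001, Gf0, Gf1]
    ring
  have hq0 : vVec ptilde 0 = 0.3 * (1 + (Real.logb 2 3)⁻¹)⁻¹ + 0.15 := by
    rw [vVec, sum_bool3]
    simp (config := { decide := true }) only [ptilde, if_true, if_false, toReal3]
    norm_num [Z110, Z101, Z011, Z100, Z010, Z001, Gf0, Gf1]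
    ring
  have hq1 : vVec ptilde 1 = 0.3 * (1 + (Real.logb 2 3)⁻¹)⁻¹ + 0.15 := by
    rw [vVec, sum_bool3]
    simp (config := { decide := true }) only [ptilde, if_true, if_false, toReal3]
    norm_num [Z110, Z101, Z011, Z100, Z010, Z001, Gf0, Gf1]
    ring
  have hq2 : vVec ptilde 2 = 0.4 := by
    rw [vVec, sum_bool3]
    simp (config := { decide := true }) only [ptilde, if_true, if_false, toReal3]
    norm_num [Z110, Z101, Z011, Z100, Z010, Z001, Gf0, Gf1]
  refine ⟨?_, ?_, ?_, ?_, ?_, ?_, ?_, ?_⟩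
  · intro R; simp only [pdist]; split_ifs <;> norm_num
  · rw [sum_bool3]
    simp (config := { decide := true }) only [pdist, if_true, if_false]
    norm_num
  · intro R; simp only [ptilde]; split_ifs <;> norm_num
  · rw [sum_bool3]
    simp (config := { decide := true }) only [ptilde, if_true, if_false]
    norm_num
  · funext i
    fin_cases i <;>
    · rw [sum_bool3]
      simp (config := { decide := true }) only [pdist, if_true, if_false, toReal3]
      norm_num
  · funext i
    fin_cases i <;>
    · rw [sum_bool3]
      simp (config := { decide := true }) only [ptilde, if_true, if_false, toReal3]
      norm_num
  · have k1 : vVec pdist 0 < vVec pdist 1 := by rw [hp0, hp1]; linarith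
    have k2 : vVec pdist 2 < vVec pdist 1 := by rw [hp2, hp1]; linarith
    intro j hj
    fin_cases j
    · exact k1
    · exact absurd rfl hj
    · exact k2
  · have k1 : vVec ptilde 0 < vVec ptilde 2 := by rw [hq0, hq2]; linarith
    have k2 : vVec ptilde 1 < vVec ptilde 2 := by rw [hq1, hq2]; linarith
    intro j hj
    fin_cases j
    · exact k1
    · exact k2
    · exact absurd rfl hj
end
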